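/- arXiv:2506.20053 — 6 statements merged into one kernel-verified Lean document; each statement's English description precedes it below -/
import Mathlib

section
/- Let X be a topological Markov shift with transition matrix A₀ and countable state space S, and let φ:X→ℝ satisfy [φ]₂<∞ and be summable. Let c ≥ [φ]₂θ/(1-θ) and let Λ_c be the cone of nonnegative continuous functions f on X satisfying f(ω) ≤ e^{c d_θ(ω,υ)} f(υ) whenever ω₀=υ₀. Then for any f∈Λ_c such that the transfer operator image L_{A₀,φ}f is continuous, L_{A₀,φ}f ∈ Λ_c, where L_{A₀,φ}f(ω) = Σ_{a: A₀(aω₀)=1} e^{φ(a·ω)} f(a·ω). -/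
/-- The topological Markov shift with state space `S` and transition matrix `A`. -/
abbrev TMS {S : Type*} (A : S → S → Prop) := {ω : ℕ → S // ∀ n, A (ω n) (ω (n + 1))}

/-- The metric `d_θ`. -/
noncomputable def dtheta {S : Type*} (θ : ℝ) (ω υ : ℕ → S) : ℝ := by
  classical
  exact if h : ω = υ then 0
  else θ ^ Nat.find (show ∃ n, ω n ≠ υ n from by
    by_contra hc; push_neg at hc; exact h (funext hc))

/-- Concatenation `a·ω` of an admissible symbol `a` with `ω`. -/
def consTMS {S : Type*} {A : S → S → Prop} (a : S) (ω : TMS A) (h : A a (ω.1 0)) :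
    TMS A :=
  ⟨fun n => Nat.rec a (fun k _ => ω.1 k) n, by
    intro n
    cases n with
    | zero => exact h
    | succ k => exact ω.2 k⟩

/-- The transfer (Ruelle) operator `L_{A,φ} f(ω) = Σ_{a : A(aω₀)=1} e^{φ(a·ω)} f(a·ω)`. -/
noncomputable def transferOp {S : Type*} {A : S → S → Prop}
    (φ f : TMS A → ℝ) (ω : TMS A) : ℝ :=
  ∑' a : {a : S // A a (ω.1 0)}, Real.exp (φ (consTMS a.1 ω a.2)) * f (consTMS a.1 ω a.2)

/-- The cone `Λ_c` of nonnegative continuous functions `f` with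
`f(ω) ≤ e^{c d_θ(ω,υ)} f(υ)` whenever `ω₀ = υ₀`. -/
def LambdaCone {S : Type*} [TopologicalSpace S] {A : S → S → Prop} (θ c : ℝ)
    (f : TMS A → ℝ) : Prop :=
  Continuous f ∧ (∀ ω, 0 ≤ f ω) ∧
    ∀ ω υ : TMS A, ω.1 0 = υ.1 0 → f ω ≤ Real.exp (c * dtheta θ ω.1 υ.1) * f υ

lemma dtheta_nonneg {S : Type*} {θ : ℝ} (hθ : 0 ≤ θ) (ω υ : ℕ → S) : 0 ≤ dtheta θ ω υ := by
  unfold dtheta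
  split
  · exact le_refl 0
  · positivity

lemma dtheta_symm {S : Type*} (θ : ℝ) (ω υ : ℕ → S) : dtheta θ ω υ = dtheta θ υ ω := by
  classical
  by_cases h : ω = υ
  · simp [h]
  · have h1 : ∃ n, ω n ≠ υ n := by
      by_contra hc; push_neg at hc; exact h (funext hc)
    have h2 : ∃ n, υ n ≠ ω n := by
      by_contra hc; push_neg at hc; exact h (funext fun n => (hc n).symm)
    unfold dtheta
    rw [dif_neg h, dif_neg (Ne.symm h)]
    congr 1
    apply le_antisymm
    · exact Nat.find_le (fun e => Nat.find_spec h2 e.symm)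
    · exact Nat.find_le (fun e => Nat.find_spec h1 e.symm)

lemma dtheta_cons {S : Type*} {A : S → S → Prop} (θ : ℝ) (a : S) (ω υ : TMS A)
    (hω : A a (ω.1 0)) (hυ : A a (υ.1 0)) (hne : ω.1 ≠ υ.1) :
    dtheta θ (consTMS a ω hω).1 (consTMS a υ hυ).1 = θ * dtheta θ ω.1 υ.1 := by
  classical
  have hcne : (consTMS a ω hω).1 ≠ (consTMS a υ hυ).1 := by
    intro h
    apply hne
    funext n
    exact congrFun h (n + 1)
  have hex : ∃ n, ω.1 n ≠ υ.1 n := by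
    by_contra hc; push_neg at hc; exact hne (funext hc)
  have hexc : ∃ n, (consTMS a ω hω).1 n ≠ (consTMS a υ hυ).1 n :=
    ⟨Nat.find hex + 1, Nat.find_spec hex⟩
  unfold dtheta
  rw [dif_neg hcne, dif_neg hne]
  have hfind : Nat.find hexc = Nat.find hex + 1 := by
    apply le_antisymm
    · exact Nat.find_le (Nat.find_spec hex)
    · rw [Nat.add_one_le_iff, Nat.lt_find_iff]
      intro m hm
      cases m with
      | zero => simp [consTMS]
      | succ k =>
        have : ω.1 k = υ.1 k := by
          by_contra hk
          exact absurd (Nat.find_le hk : Nat.find hex ≤ k) (by omega)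
        simpa [consTMS] using this
  rw [hfind, pow_succ]
  ring

/-- Termwise inequality. -/
lemma term_le {S : Type*} [TopologicalSpace S] {A : S → S → Prop}
    (θ : ℝ) (hθ0 : 0 < θ) (hθ1 : θ < 1)
    (φ : TMS A → ℝ) (c₂ : ℝ) (hc₂ : 0 ≤ c₂)
    (hlip : ∀ ω υ : TMS A, ω ≠ υ → ω.1 0 = υ.1 0 → ω.1 1 = υ.1 1 →
      |φ ω - φ υ| ≤ c₂ * dtheta θ ω.1 υ.1)
    (c : ℝ) (hc : c₂ * θ / (1 - θ) ≤ c)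
    (f : TMS A → ℝ) (hf : LambdaCone θ c f)
    (ω υ : TMS A) (h0 : ω.1 0 = υ.1 0)
    (a : S) (haω : A a (ω.1 0)) (haυ : A a (υ.1 0)) :
    Real.exp (φ (consTMS a ω haω)) * f (consTMS a ω haω) ≤
      Real.exp (c * dtheta θ ω.1 υ.1) *
        (Real.exp (φ (consTMS a υ haυ)) * f (consTMS a υ haυ)) := by
  have hθ1' : 0 < 1 - θ := by linarith
  have hc0 : 0 ≤ c := le_trans (by positivity) hc
  by_cases heq : ω.1 = υ.1
  · have : ω = υ := Subtype.ext heq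
    subst this
    have : consTMS a ω haω = consTMS a ω haυ := rfl
    rw [this]
    have : dtheta θ ω.1 ω.1 = 0 := by unfold dtheta; rw [dif_pos rfl]
    rw [this, mul_zero, Real.exp_zero, one_mul]
  · set d := dtheta θ ω.1 υ.1 with hd
    have hd0 : 0 ≤ d := dtheta_nonneg hθ0.le _ _
    set cω := consTMS a ω haω
    set cυ := consTMS a υ haυ
    have hcne : cω ≠ cυ := by
      intro h
      apply heq
      funext n
      exact congrFun (congrArg Subtype.val h) (n + 1)
    have hdc : dtheta θ cω.1 cυ.1 = θ * d := dtheta_cons θ a ω υ haω haυ heq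
    have h1' : cω.1 1 = cυ.1 1 := h0
    have hφ := hlip cω cυ hcne rfl h1'
    rw [hdc] at hφ
    have hφ' : φ cω ≤ φ cυ + c₂ * (θ * d) := by
      have := abs_le.mp hφ
      linarith [this.1, this.2]
    have hfle : f cω ≤ Real.exp (c * (θ * d)) * f cυ := by
      have := hf.2.2 cω cυ rfl
      rwa [hdc] at this
    have hfω : 0 ≤ f cω := hf.2.1 _
    have hfυ : 0 ≤ f cυ := hf.2.1 _
    calc Real.exp (φ cω) * f cω
        ≤ Real.exp (φ cυ + c₂ * (θ * d)) * (Real.exp (c * (θ * d)) * f cυ) := by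
          apply mul_le_mul (Real.exp_le_exp.mpr hφ') hfle hfω (Real.exp_pos _).le
      _ = Real.exp (c₂ * (θ * d) + c * (θ * d)) * (Real.exp (φ cυ) * f cυ) := by
          rw [Real.exp_add, Real.exp_add]; ring
      _ ≤ Real.exp (c * d) * (Real.exp (φ cυ) * f cυ) := by
          apply mul_le_mul_of_nonneg_right _ (by positivity)
          apply Real.exp_le_exp.mpr
          have hkey : c₂ * θ + c * θ ≤ c := by
            rw [div_le_iff₀ hθ1'] at hc
            nlinarith
          nlinarith

/-- Proposition `prop:prop_Lamc0`(4): for a summable weak-Lipschitz potential `φ` and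
`c ≥ [φ]₂ θ/(1-θ)`, the transfer operator preserves the cone `Λ_c` (on functions whose
image is continuous). -/
theorem stmt2 {S : Type*} [TopologicalSpace S] [DiscreteTopology S] [Countable S]
    {A : S → S → Prop}
    (θ : ℝ) (hθ0 : 0 < θ) (hθ1 : θ < 1)
    (φ : TMS A → ℝ) (c₂ : ℝ) (hc₂ : 0 ≤ c₂)
    (hlip : ∀ ω υ : TMS A, ω ≠ υ → ω.1 0 = υ.1 0 → ω.1 1 = υ.1 1 →
      |φ ω - φ υ| ≤ c₂ * dtheta θ ω.1 υ.1)
    (hsumm : Summable (fun s : {s : S // ∃ ω : TMS A, ω.1 0 = s} =>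
      Real.exp (⨆ ω : {ω : TMS A // ω.1 0 = s.1}, φ ω.1)))
    (c : ℝ) (hc : c₂ * θ / (1 - θ) ≤ c)
    (f : TMS A → ℝ) (hf : LambdaCone θ c f)
    (hcont : Continuous (transferOp φ f)) :
    LambdaCone θ c (transferOp φ f) := by
  refine ⟨hcont, ?_, ?_⟩
  · intro ω
    apply tsum_nonneg
    intro a
    exact mul_nonneg (Real.exp_pos _).le (hf.2.1 _)
  · intro ω υ h0
    -- rewrite the ω-sum over the υ-index set
    set I := {a : S // A a (υ.1 0)}
    let e : I ≃ {a : S // A a (ω.1 0)} :=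
      ⟨fun a => ⟨a.1, h0.symm ▸ a.2⟩, fun b => ⟨b.1, h0 ▸ b.2⟩,
        fun a => Subtype.ext rfl, fun b => Subtype.ext rfl⟩
    set G : I → ℝ := fun a =>
      Real.exp (φ (consTMS a.1 υ a.2)) * f (consTMS a.1 υ a.2) with hG
    set F : I → ℝ := fun a =>
      Real.exp (φ (consTMS a.1 ω (e a).2)) * f (consTMS a.1 ω (e a).2) with hF
    have hωsum : transferOp φ f ω = ∑' a : I, F a := by
      rw [transferOp]
      exact (e.tsum_eq (fun b : {a : S // A a (ω.1 0)} =>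
        Real.exp (φ (consTMS b.1 ω b.2)) * f (consTMS b.1 ω b.2))).symm
    have hυsum : transferOp φ f υ = ∑' a : I, G a := rfl
    rw [hωsum, hυsum]
    have hFG : ∀ a : I, F a ≤ Real.exp (c * dtheta θ ω.1 υ.1) * G a := fun a =>
      term_le θ hθ0 hθ1 φ c₂ hc₂ hlip c hc f hf ω υ h0 a.1 (e a).2 a.2
    have hGF : ∀ a : I, G a ≤ Real.exp (c * dtheta θ ω.1 υ.1) * F a := by
      intro a
      rw [show dtheta θ ω.1 υ.1 = dtheta θ υ.1 ω.1 from dtheta_symm θ _ _]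
      exact term_le θ hθ0 hθ1 φ c₂ hc₂ hlip c hc f hf υ ω h0.symm a.1 a.2 (e a).2
    have hF0 : ∀ a : I, 0 ≤ F a := fun a => mul_nonneg (Real.exp_pos _).le (hf.2.1 _)
    have hG0 : ∀ a : I, 0 ≤ G a := fun a => mul_nonneg (Real.exp_pos _).le (hf.2.1 _)
    by_cases hS : Summable G
    · have hSF : Summable F :=
        Summable.of_nonneg_of_le hF0 hFG (hS.mul_left _)
      calc ∑' a, F a ≤ ∑' a, Real.exp (c * dtheta θ ω.1 υ.1) * G a :=
            Summable.tsum_le_tsum hFG hSF (hS.mul_left _)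
        _ = Real.exp (c * dtheta θ ω.1 υ.1) * ∑' a, G a := tsum_mul_left
    · have hSF : ¬ Summable F := fun hSF => hS
        (Summable.of_nonneg_of_le hG0 hGF (hSF.mul_left _))
      rw [tsum_eq_zero_of_not_summable hS, tsum_eq_zero_of_not_summable hSF, mul_zero]
end

section
/- Under the hypotheses of the modified Schur–Frobenius factorization (λ in the resolvent set of ℳ_{VV}, λ,η≠0, U,V disjoint, U≠∅), the number η is in the resolvent set of the operator ℳ_η = ℳ_{UU} + ηλ^{-1}ℳ_{UV} + ℳ_{VU} + ηλ^{-1}ℳ_{VV} (acting on χ_{U∪V}·𝒳) if and only if η is in the resolvent set of the Perron complement ℳ[U,V,λ] = ℳ_{UU} + ℳ_{UV}(λI-ℳ_{VV})^{-1}ℳ_{VU} (acting on χ_U·𝒳). -/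
open ContinuousLinearMap

section AbstractSchur

variable {A : Type*} [Ring A]

private lemma mul_rra {x y z : A} (h : x * y = z) (w : A) : x * (y * w) = z * w := by
  rw [← mul_assoc, h]

private lemma blockL {u v x : A} (hu : u * u = u) (hx : u * x * v = x) : u * x = x := by
  conv_lhs => rw [← hx]
  rw [← mul_assoc, ← mul_assoc, hu, hx]

private lemma blockR {u v x : A} (hv : v * v = v) (hx : u * x * v = x) : x * v = x := by
  conv_lhs => rw [← hx]
  rw [mul_assoc, hv, hx]

private lemma blockZR {u v x w : A} (hx : u * x * v = x) (hw : v * w = 0) : x * w = 0 := by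
  rw [← hx, mul_assoc, hw, mul_zero]

private lemma blockZL {u v x w : A} (hx : u * x * v = x) (hw : w * u = 0) : w * x = 0 := by
  rw [← hx, ← mul_assoc, ← mul_assoc, hw, zero_mul, zero_mul]

lemma schur_iff (p q a b c d f : A)
    (hp : p * p = p) (hq : q * q = q) (hpq : p * q = 0) (hqp : q * p = 0)
    (ha : p * a * p = a) (hb : p * b * q = b) (hc : q * c * p = c) (hd : q * d * q = d)
    (hf : q * f * q = f) (hdf : d * f = q) (hfd : f * d = q) :
    (∃ m, (p + q) * (m * (p + q)) = m ∧ (a + b + c + d) * m = p + q ∧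
        m * (a + b + c + d) = p + q) ↔
    (∃ n, p * (n * p) = n ∧ (a - b * f * c) * n = p ∧ n * (a - b * f * c) = p) := by
  have pa : p * a = a := blockL hp ha
  have ap : a * p = a := blockR hp ha
  have pb : p * b = b := blockL hp hb
  have bq : b * q = b := blockR hq hb
  have qc : q * c = c := blockL hq hc
  have cp : c * p = c := blockR hp hc
  have qd : q * d = d := blockL hq hd
  have dq : d * q = d := blockR hq hd
  have qf : q * f = f := blockL hq hf
  have fq : f * q = f := blockR hq hf
  have aq : a * q = 0 := blockZR ha hpq
  have qa : q * a = 0 := blockZL ha hqp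
  have bp : b * p = 0 := blockZR hb hqp
  have qb : q * b = 0 := blockZL hb hqp
  have cq : c * q = 0 := blockZR hc hpq
  have pc : p * c = 0 := blockZL hc hpq
  have dp : d * p = 0 := blockZR hd hqp
  have pd : p * d = 0 := blockZL hd hpq
  have fp : f * p = 0 := blockZR hf hqp
  have pf : p * f = 0 := blockZL hf hpq
  have af : a * f = 0 := blockZR ha pf
  have fa : f * a = 0 := blockZL ha fp
  have cf : c * f = 0 := blockZR hc pf
  have fb : f * b = 0 := blockZL hb fp
  constructor
  · rintro ⟨m, -, h1, h2⟩
    refine ⟨p * (m * p), ?_, ?_, ?_⟩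
    · simp only [mul_assoc, mul_rra hp, hp]
    · have hAw : (a + b + c + d) * (m * p) = p := by
        rw [← mul_assoc, h1, add_mul, hp, hqp, add_zero]
      have pA : p * (a + b + c + d) = a + b := by
        simp only [mul_add, pa, pb, pc, pd, add_zero, zero_add]
      have e1 : (a + b) * (m * p) = p := by rw [← pA, mul_assoc, hAw, hp]
      have qA : q * (a + b + c + d) = c + d := by
        simp only [mul_add, qa, qb, qc, qd, add_zero, zero_add]
      have e2 : (c + d) * (m * p) = 0 := by rw [← qA, mul_assoc, hAw, hqp]
      have e3 : f * (c * (m * p)) = -(q * (m * p)) := by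
        have h3 : f * (c * (m * p)) + f * (d * (m * p)) = 0 := by
          rw [← mul_add, ← add_mul, e2, mul_zero]
        rw [mul_rra hfd] at h3
        exact eq_neg_of_add_eq_zero_left h3
      calc (a - b * f * c) * (p * (m * p))
          = a * (p * (m * p)) - b * (f * (c * (p * (m * p)))) := by noncomm_ring
        _ = a * (m * p) - b * (f * (c * (m * p))) := by rw [mul_rra ap, mul_rra cp]
        _ = a * (m * p) - b * (-(q * (m * p))) := by rw [e3]
        _ = a * (m * p) + b * (q * (m * p)) := by noncomm_ring
        _ = (a + b) * (m * p) := by rw [mul_rra bq, add_mul]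
        _ = p := e1
    · have hwA : (p * m) * (a + b + c + d) = p := by
        rw [mul_assoc, h2, mul_add, hp, hpq, add_zero]
      have Ap : (a + b + c + d) * p = a + c := by
        simp only [add_mul, ap, bp, cp, dp, add_zero, zero_add]
      have e1 : (p * m) * (a + c) = p := by rw [← Ap, ← mul_assoc, hwA, hp]
      have Aq : (a + b + c + d) * q = b + d := by
        simp only [add_mul, aq, bq, cq, dq, add_zero, zero_add]
      have e2 : (p * m) * (b + d) = 0 := by rw [← Aq, ← mul_assoc, hwA, hpq]
      have e3 : (p * m) * (b * f) = -((p * m) * q) := by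
        have h3 : (p * m) * (b * f) + (p * m) * (d * f) = 0 := by
          rw [← mul_add, ← add_mul, ← mul_assoc, e2, zero_mul]
        rw [hdf] at h3
        exact eq_neg_of_add_eq_zero_left h3
      calc p * (m * p) * (a - b * f * c)
          = (p * m) * (p * a) - (p * m) * (p * (b * (f * c))) := by noncomm_ring
        _ = (p * m) * a - ((p * m) * (b * f)) * c := by rw [pa, mul_rra pb]; noncomm_ring
        _ = (p * m) * a - (-((p * m) * q)) * c := by rw [e3]
        _ = (p * m) * a + (p * m) * (q * c) := by noncomm_ring
        _ = (p * m) * (a + c) := by rw [qc, mul_add]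
        _ = p := e1
  · rintro ⟨n, hn0, h1, h2⟩
    have hn : p * n * p = n := by rw [mul_assoc]; exact hn0
    have pn : p * n = n := blockL hp hn
    have np : n * p = n := blockR hp hn
    have nq : n * q = 0 := blockZR hn hpq
    have qn : q * n = 0 := blockZL hn hqp
    have nc : n * c = 0 := blockZR hn pc
    have nd : n * d = 0 := blockZR hn pd
    have nf : n * f = 0 := blockZR hn pf
    have bn : b * n = 0 := blockZL hn bp
    have dn : d * n = 0 := blockZL hn dp
    have fn : f * n = 0 := blockZL hn fp
    have an : a * n = p + b * (f * (c * n)) := by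
      rw [sub_mul, mul_assoc, mul_assoc] at h1
      exact sub_eq_iff_eq_add.mp h1
    have na : n * a = p + n * (b * (f * c)) := by
      rw [mul_sub, mul_assoc] at h2
      exact sub_eq_iff_eq_add.mp h2
    have an' : ∀ x, a * (n * x) = p * x + b * (f * (c * (n * x))) := fun x => by
      rw [← mul_assoc, an, add_mul]; noncomm_ring
    have na' : ∀ x, n * (a * x) = p * x + n * (b * (f * (c * x))) := fun x => by
      rw [← mul_assoc, na, add_mul]; noncomm_ring
    refine ⟨n - n * (b * f) - f * (c * n) + f + f * (c * (n * (b * f))), ?_, ?_, ?_⟩ <;>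
    · simp only [mul_add, add_mul, mul_sub, sub_mul, mul_assoc, mul_neg, neg_mul,
        an, na, an', na',
        hp, hq, hpq, hqp, pa, ap, pb, bq, qc, cp, qd, dq, qf, fq,
        aq, qa, bp, qb, cq, pc, dp, pd, fp, pf, af, fa, cf, fb,
        pn, np, nq, qn, nc, nd, nf, bn, dn, fn, hdf, hfd,
        mul_rra hp, mul_rra hq, mul_rra hpq, mul_rra hqp,
        mul_rra pa, mul_rra ap, mul_rra pb, mul_rra bq, mul_rra qc, mul_rra cp,
        mul_rra qd, mul_rra dq, mul_rra qf, mul_rra fq,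
        mul_rra aq, mul_rra qa, mul_rra bp, mul_rra qb, mul_rra cq, mul_rra pc,
        mul_rra dp, mul_rra pd, mul_rra fp, mul_rra pf,
        mul_rra af, mul_rra fa, mul_rra cf, mul_rra fb,
        mul_rra pn, mul_rra np, mul_rra nq, mul_rra qn, mul_rra nc, mul_rra nd,
        mul_rra nf, mul_rra bn, mul_rra dn, mul_rra fn, mul_rra hdf, mul_rra hfd,
        mul_zero, zero_mul, mul_one, one_mul, add_zero, zero_add, sub_zero, zero_sub,
        neg_neg]
      abel

end AbstractSchur

/-- `T` is invertible on the block (range of the idempotent `P`): there is an operator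
`N` supported on the block which is a two-sided inverse of `T` there. -/
def InvertibleOnBlock {𝒳 : Type*} [NormedAddCommGroup 𝒳] [NormedSpace ℂ 𝒳]
    (T P : 𝒳 →L[ℂ] 𝒳) : Prop :=
  ∃ N : 𝒳 →L[ℂ] 𝒳, P ∘L (N ∘L P) = N ∧ T ∘L N = P ∧ N ∘L T = P

/-- Theorem `th:PC_FS` (consequence): `η` is in the resolvent set of the block operator
`ℳ_η` (acting on `χ_{U∪V}𝒳`) iff `η` is in the resolvent set of the Perron complement
`ℳ[U,V,λ]` (acting on `χ_U𝒳`). Here `R = (ℳ_VV - λI)⁻¹`, so the Perron complement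
`ℳ[U,V,λ] = ℳ_UU + ℳ_UV(λI-ℳ_VV)⁻¹ℳ_VU` equals `ℳ_UU - ℳ_UV R ℳ_VU`. -/
theorem stmt5 {S 𝒳 : Type*} [NormedAddCommGroup 𝒳] [NormedSpace ℂ 𝒳] [CompleteSpace 𝒳]
    (e : Set S → (𝒳 →L[ℂ] 𝒳))
    (he : ∀ U V : Set S, (e U) ∘L (e V) = e (U ∩ V))
    (hbot : e ∅ = 0)
    (hadd : ∀ U V : Set S, Disjoint U V → e (U ∪ V) = e U + e V)
    (ℳ : 𝒳 →L[ℂ] 𝒳) (U V : Set S) (hUV : Disjoint U V) (hU : U.Nonempty)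
    (lam η : ℂ) (hlam : lam ≠ 0) (hη : η ≠ 0)
    (R : 𝒳 →L[ℂ] 𝒳)
    (hR1 : ((e V ∘L ℳ ∘L e V) - lam • (1 : 𝒳 →L[ℂ] 𝒳)) ∘L R = 1)
    (hR2 : R ∘L ((e V ∘L ℳ ∘L e V) - lam • (1 : 𝒳 →L[ℂ] 𝒳)) = 1) :
    let MUU := e U ∘L ℳ ∘L e U
    let MUV := e U ∘L ℳ ∘L e V
    let MVU := e V ∘L ℳ ∘L e U
    let MVV := e V ∘L ℳ ∘L e V
    let PC := MUU - MUV ∘L R ∘L MVU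
    let Meta := MUU + (η * lam⁻¹) • MUV + MVU + (η * lam⁻¹) • MVV
    (InvertibleOnBlock (Meta - η • e (U ∪ V)) (e (U ∪ V)) ↔
      InvertibleOnBlock (PC - η • e U) (e U)) := by
  intro MUU MUV MVU MVV PC Meta
  have hp : e U * e U = e U := by rw [mul_def, he, Set.inter_self]
  have hq : e V * e V = e V := by rw [mul_def, he, Set.inter_self]
  have hpq : e U * e V = 0 := by
    rw [mul_def, he, Set.disjoint_iff_inter_eq_empty.mp hUV, hbot]
  have hqp : e V * e U = 0 := by
    rw [mul_def, he, Set.inter_comm, Set.disjoint_iff_inter_eq_empty.mp hUV, hbot]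
  have h1' : (MVV - lam • (1 : 𝒳 →L[ℂ] 𝒳)) * R = 1 := hR1
  have h2' : R * (MVV - lam • (1 : 𝒳 →L[ℂ] 𝒳)) = 1 := hR2
  -- absorption facts
  have hUU_l : e U * MUU = MUU := by
    show e U * (e U * (ℳ * e U)) = _; rw [← mul_assoc, hp]; exact rfl
  have hUU_r : MUU * e U = MUU := by
    show (e U * (ℳ * e U)) * e U = _; rw [mul_assoc, mul_assoc, hp]; exact rfl
  have hUV_l : e U * MUV = MUV := by
    show e U * (e U * (ℳ * e V)) = _; rw [← mul_assoc, hp]; exact rfl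
  have hUV_r : MUV * e V = MUV := by
    show (e U * (ℳ * e V)) * e V = _; rw [mul_assoc, mul_assoc, hq]; exact rfl
  have hVU_l : e V * MVU = MVU := by
    show e V * (e V * (ℳ * e U)) = _; rw [← mul_assoc, hq]; exact rfl
  have hVU_r : MVU * e U = MVU := by
    show (e V * (ℳ * e U)) * e U = _; rw [mul_assoc, mul_assoc, hp]; exact rfl
  have hVV_l : e V * MVV = MVV := by
    show e V * (e V * (ℳ * e V)) = _; rw [← mul_assoc, hq]; exact rfl
  have hVV_r : MVV * e V = MVV := by
    show (e V * (ℳ * e V)) * e V = _; rw [mul_assoc, mul_assoc, hq]; exact rfl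
  have hcm : e V * (MVV - lam • (1 : 𝒳 →L[ℂ] 𝒳)) = (MVV - lam • (1 : 𝒳 →L[ℂ] 𝒳)) * e V := by
    simp only [mul_sub, sub_mul, hVV_l, hVV_r, mul_smul_comm, smul_mul_assoc, one_mul, mul_one]
  have hqR : e V * R = R * e V := by
    calc e V * R = (R * (MVV - lam • (1 : 𝒳 →L[ℂ] 𝒳))) * (e V * R) := by rw [h2', one_mul]
      _ = R * ((MVV - lam • (1 : 𝒳 →L[ℂ] 𝒳)) * e V * R) := by noncomm_ring
      _ = R * (e V * ((MVV - lam • (1 : 𝒳 →L[ℂ] 𝒳)) * R)) := by rw [← hcm]; noncomm_ring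
      _ = R * (e V * 1) := by rw [h1']
      _ = R * e V := by rw [mul_one]
  have hστ : (η * lam⁻¹) * (η⁻¹ * lam) = 1 := by field_simp
  have hsiglam : (η * lam⁻¹) * lam = η := by field_simp
  -- block hypotheses for schur_iff
  have ha : e U * (MUU - η • e U) * e U = MUU - η • e U := by
    simp only [mul_sub, sub_mul, mul_smul_comm, smul_mul_assoc, hUU_l, hUU_r, hp]
  have hb : e U * ((η * lam⁻¹) • MUV) * e V = (η * lam⁻¹) • MUV := by
    simp only [mul_smul_comm, smul_mul_assoc, hUV_l, hUV_r]
  have hc : e V * MVU * e U = MVU := by rw [hVU_l, hVU_r]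
  have hXe : e V * ((MVV - lam • (1 : 𝒳 →L[ℂ] 𝒳)) * e V) * e V
      = (MVV - lam • (1 : 𝒳 →L[ℂ] 𝒳)) * e V := by
    rw [← mul_assoc, hcm]
    simp only [mul_assoc, mul_rra hq, hq]
  have hd : e V * ((η * lam⁻¹) • ((MVV - lam • (1 : 𝒳 →L[ℂ] 𝒳)) * e V)) * e V
      = (η * lam⁻¹) • ((MVV - lam • (1 : 𝒳 →L[ℂ] 𝒳)) * e V) := by
    simp only [mul_smul_comm, smul_mul_assoc, hXe]
  have hf : e V * ((η⁻¹ * lam) • (R * e V)) * e V = (η⁻¹ * lam) • (R * e V) := by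
    simp only [mul_smul_comm, smul_mul_assoc]
    rw [← mul_assoc, hqR]
    simp only [mul_assoc, mul_rra hq, hq]
  have hdf0 : ((MVV - lam • (1 : 𝒳 →L[ℂ] 𝒳)) * e V) * (R * e V) = e V := by
    rw [mul_assoc, ← mul_assoc (e V) R, hqR, mul_assoc, hq, ← mul_assoc, h1', one_mul]
  have hdf : ((η * lam⁻¹) • ((MVV - lam • (1 : 𝒳 →L[ℂ] 𝒳)) * e V))
      * ((η⁻¹ * lam) • (R * e V)) = e V := by
    rw [smul_mul_assoc, mul_smul_comm, smul_smul, hστ, one_smul, hdf0]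
  have hfd0 : (R * e V) * ((MVV - lam • (1 : 𝒳 →L[ℂ] 𝒳)) * e V) = e V := by
    rw [mul_assoc, ← mul_assoc (e V), hcm, mul_assoc, hq, ← mul_assoc, h2', one_mul]
  have hfd : ((η⁻¹ * lam) • (R * e V))
      * ((η * lam⁻¹) • ((MVV - lam • (1 : 𝒳 →L[ℂ] 𝒳)) * e V)) = e V := by
    rw [smul_mul_assoc, mul_smul_comm, smul_smul, mul_comm (η⁻¹ * lam), hστ, one_smul, hfd0]
  -- sum identity
  have hXeV : (MVV - lam • (1 : 𝒳 →L[ℂ] 𝒳)) * e V = MVV - lam • e V := by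
    simp only [sub_mul, hVV_r, smul_mul_assoc, one_mul]
  have hd_eq : (η * lam⁻¹) • ((MVV - lam • (1 : 𝒳 →L[ℂ] 𝒳)) * e V)
      = (η * lam⁻¹) • MVV - η • e V := by
    rw [hXeV, smul_sub, smul_smul, hsiglam]
  have hsum : Meta - η • (e U + e V)
      = (MUU - η • e U) + (η * lam⁻¹) • MUV + MVU
        + (η * lam⁻¹) • ((MVV - lam • (1 : 𝒳 →L[ℂ] 𝒳)) * e V) := by
    rw [hd_eq]
    show MUU + (η * lam⁻¹) • MUV + MVU + (η * lam⁻¹) • MVV - η • (e U + e V) = _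
    rw [smul_add]
    abel
  -- Schur complement identity
  have hbfc : ((η * lam⁻¹) • MUV) * ((η⁻¹ * lam) • (R * e V)) * MVU = MUV * (R * MVU) := by
    simp only [smul_mul_assoc, mul_smul_comm, smul_smul]
    rw [show η⁻¹ * lam * (η * lam⁻¹) = 1 by field_simp, one_smul, mul_assoc, mul_assoc, hVU_l]
  have hs : PC - η • e U
      = (MUU - η • e U) - ((η * lam⁻¹) • MUV) * ((η⁻¹ * lam) • (R * e V)) * MVU := by
    rw [hbfc]
    show MUU - MUV * (R * MVU) - η • e U = _
    abel
  rw [hadd U V hUV]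
  simp only [InvertibleOnBlock]
  rw [hsum, hs]
  exact schur_iff (e U) (e V) (MUU - η • e U) ((η * lam⁻¹) • MUV) MVU
    ((η * lam⁻¹) • ((MVV - lam • (1 : 𝒳 →L[ℂ] 𝒳)) * e V)) ((η⁻¹ * lam) • (R * e V))
    hp hq hpq hqp ha hb hc hd hf hdf hfd
end

section
/- Let ℳ be a bounded operator on a Banach space 𝒳 of functions closed under multiplication by indicators, U,V⊂S disjoint with U≠∅, W=U∪V, and λ,η∈ℂ nonzero with λ in the resolvent set of ℳ_{VV}. Then f∈𝒳 satisfies the three conditions ℳ[U,V,λ](χ_U f)=η(χ_U f), χ_V f = (λ/η)(λI-ℳ_{VV})^{-1}ℳ_{VU}(χ_U f), and χ_{S∖W} f = 0, if and only if (ℳ_{WU} + (η/λ)ℳ_{WV}) f = η f. Moreover, η is an eigenvalue of ℳ[U,V,λ] if and only if η is an eigenvalue of ℳ_{WU} + (η/λ)ℳ_{WV}. -/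
/-!
Write `P = χ_U`, `Q = χ_V`, `C = χ_{S∖W}`; these are complete orthogonal idempotents, and
`R = (λ - QMQ)⁻¹` commutes with `Q`. Applying `P`, `Q`, `C` splits
`(ℳ_WU + (η/λ) ℳ_WV) f = η f` into three equations. The `C`-component says `C f = 0`; the
`Q`-component, multiplied by `λ/η`, reads `(λ - QMQ) (Q f) = (λ/η) QMP f`, so it determines `Q f`
through `R`; substituting this into the `P`-component turns it into `ℳ[U,V,λ] (P f) = η P f`.
An eigenvector `g` of `ℳ[U,V,λ]` satisfies `P g = g` and extends to `g + (λ/η) R Q M g`;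
conversely, for an eigenvector `f` of `ℳ_WU + (η/λ) ℳ_WV` we have `P f ≠ 0`, since otherwise
all three components of `f` vanish.
-/

open ContinuousLinearMap

theorem completeOrthogonalIdempotents_of_disjoint {α A : Type*} [BooleanAlgebra α] [Ring A]
    (e : α → A) (he : ∀ a b, e a * e b = e (a ⊓ b)) (hbot : e ⊥ = 0)
    (hadd : ∀ a b, Disjoint a b → e (a ⊔ b) = e a + e b) (hcompl : ∀ a, e a + e aᶜ = 1)
    {a b : α} (hab : Disjoint a b) :
    CompleteOrthogonalIdempotents ![e a, e b, e (a ⊔ b)ᶜ] := by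
  have ortho : ∀ {x y}, Disjoint x y → e x * e y = 0 := fun h => by rw [he, h.eq_bot, hbot]
  have hac : Disjoint a (a ⊔ b)ᶜ := disjoint_compl_right.mono_left le_sup_left
  have hbc : Disjoint b (a ⊔ b)ᶜ := disjoint_compl_right.mono_left le_sup_right
  refine CompleteOrthogonalIdempotents.iff_ortho_complete.mpr ⟨?_, ?_⟩
  · intro i j hij
    fin_cases i <;> fin_cases j <;> first
      | exact absurd rfl hij
      | exact ortho hab | exact ortho hab.symm | exact ortho hac | exact ortho hac.symm
      | exact ortho hbc | exact ortho hbc.symm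
  · rw [Fin.sum_univ_three]
    simpa [← hadd a b hab] using hcompl (a ⊔ b)

theorem IsIdempotentElem.commute_resolvent {𝕜 A : Type*} [Field 𝕜] [Ring A] [Algebra 𝕜 A]
    {Q M R : A} {lam : 𝕜} (hQ : IsIdempotentElem Q)
    (hR1 : (lam • 1 - Q * M * Q) * R = 1) (hR2 : R * (lam • 1 - Q * M * Q) = 1) :
    Commute Q R := by
  have hD : Commute Q (lam • 1 - Q * M * Q) := by
    simp only [Commute, SemiconjBy, mul_sub, sub_mul, mul_smul_comm, smul_mul_assoc, mul_one,
      one_mul, ← mul_assoc, hQ.eq]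
    rw [mul_assoc _ Q Q, hQ.eq]
  exact hD.units_inv_right (u := ⟨_, R, hR1, hR2⟩)

theorem ContinuousLinearMap.apply_eq_iff_eq_apply_of_mul_eq_one {R₁ M : Type*} [Semiring R₁]
    [TopologicalSpace M] [AddCommMonoid M] [Module R₁ M] {D R : M →L[R₁] M}
    (h1 : D * R = 1) (h2 : R * D = 1) {x y : M} : D x = y ↔ x = R y := by
  constructor
  · rintro rfl; exact (congr($h2 x)).symm
  · rintro rfl; exact congr($h1 y)

section Projections

variable {R₁ M : Type*} [Semiring R₁] [TopologicalSpace M] [AddCommMonoid M] [ContinuousAdd M]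
  [Module R₁ M]

theorem OrthogonalIdempotents.apply_apply_of_ne {ι : Type*} {e : ι → M →L[R₁] M}
    (h : OrthogonalIdempotents e) {i j : ι} (hij : i ≠ j) (x : M) : e i (e j x) = 0 :=
  congr($(h.ortho hij) x)

theorem OrthogonalIdempotents.apply_apply_self {ι : Type*} {e : ι → M →L[R₁] M}
    (h : OrthogonalIdempotents e) (i : ι) (x : M) : e i (e i x) = e i x :=
  congr($((h.idem i).eq) x)

theorem CompleteOrthogonalIdempotents.apply_add_apply_add_apply {P Q C : M →L[R₁] M}
    (h : CompleteOrthogonalIdempotents ![P, Q, C]) (x : M) : P x + Q x + C x = x := by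
  simpa [Fin.sum_univ_three] using congr($h.complete x)

theorem CompleteOrthogonalIdempotents.ext_iff_fin_three {P Q C : M →L[R₁] M}
    (h : CompleteOrthogonalIdempotents ![P, Q, C]) {x y : M} :
    x = y ↔ P x = P y ∧ Q x = Q y ∧ C x = C y := by
  refine ⟨fun hxy => hxy ▸ ⟨rfl, rfl, rfl⟩, fun ⟨hP, hQ, hC⟩ => ?_⟩
  rw [← h.apply_add_apply_add_apply x, ← h.apply_add_apply_add_apply y, hP, hQ, hC]

end Projections

section PerronComplement

variable {𝕜 E : Type*} [Field 𝕜] [AddCommGroup E] [TopologicalSpace E] [IsTopologicalAddGroup E]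
  [Module 𝕜 E] [ContinuousConstSMul 𝕜 E]

def perronComplement (P Q M R : E →L[𝕜] E) : E →L[𝕜] E :=
  P ∘L M ∘L P + (P ∘L M ∘L Q) ∘L (R ∘L (Q ∘L M ∘L P))

variable {P Q C M R : E →L[𝕜] E} {lam η : 𝕜}

theorem IsIdempotentElem.apply_resolvent_apply (hQ : IsIdempotentElem Q)
    (hR1 : (lam • 1 - Q ∘L M ∘L Q) ∘L R = 1) (hR2 : R ∘L (lam • 1 - Q ∘L M ∘L Q) = 1) (x : E) :
    Q (R (Q x)) = R (Q x) := by
  have hQQ : Q (Q x) = Q x := congr($hQ.eq x)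
  simpa only [mul_apply_eq_comp, hQQ] using congr($((hQ.commute_resolvent hR1 hR2).eq) (Q x))

theorem eq_smul_resolvent_iff (hR1 : (lam • 1 - Q ∘L M ∘L Q) ∘L R = 1)
    (hR2 : R ∘L (lam • 1 - Q ∘L M ∘L Q) = 1) (hlam : lam ≠ 0) (hη : η ≠ 0) {x z : E}
    (hx : Q x = x) :
    z + (η / lam) • Q (M x) = η • x ↔ x = (lam / η) • R z := by
  rw [← map_smul R, ← apply_eq_iff_eq_apply_of_mul_eq_one hR1 hR2]
  simp only [sub_apply, smul_apply, one_apply_eq_self, coe_comp, Function.comp_apply, hx]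
  constructor <;> intro h
  · linear_combination (norm := match_scalars) (-(lam / η)) • h <;> field_simp <;> ring
  · linear_combination (norm := match_scalars) (-(η / lam)) • h <;> field_simp <;> ring

theorem perronComplement_eigen_and_extension_iff (h : CompleteOrthogonalIdempotents ![P, Q, C])
    (hR1 : (lam • 1 - Q ∘L M ∘L Q) ∘L R = 1) (hR2 : R ∘L (lam • 1 - Q ∘L M ∘L Q) = 1)
    (hlam : lam ≠ 0) (hη : η ≠ 0) (f : E) :
    (perronComplement P Q M R (P f) = η • P f ∧ Q f = (lam / η) • R ((Q ∘L M ∘L P) (P f)) ∧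
        C f = 0) ↔
      ((P + Q) ∘L M ∘L P + (η / lam) • (P + Q) ∘L M ∘L Q) f = η • f := by
  have hPP : ∀ x, P (P x) = P x := h.apply_apply_self 0
  have hQQ : ∀ x, Q (Q x) = Q x := h.apply_apply_self 1
  have hPQ : ∀ x, P (Q x) = 0 := h.apply_apply_of_ne (i := 0) (j := 1) (by decide)
  have hQP : ∀ x, Q (P x) = 0 := h.apply_apply_of_ne (i := 1) (j := 0) (by decide)
  have hCP : ∀ x, C (P x) = 0 := h.apply_apply_of_ne (i := 2) (j := 0) (by decide)
  have hCQ : ∀ x, C (Q x) = 0 := h.apply_apply_of_ne (i := 2) (j := 1) (by decide)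
  have hQRQ : ∀ x, Q (R (Q x)) = R (Q x) := (h.idem 1).apply_resolvent_apply hR1 hR2
  rw [h.ext_iff_fin_three (y := η • f)]
  simp only [perronComplement, add_apply, smul_apply, coe_comp, Function.comp_apply, map_add,
    map_smul, hPP, hQQ, hPQ, hQP, hCP, hCQ, hQRQ, add_zero, zero_add, smul_zero]
  rw [eq_comm (a := (0 : E)), smul_eq_zero, or_iff_right hη,
    eq_smul_resolvent_iff hR1 hR2 hlam hη (hQQ f)]
  refine and_congr_left fun ⟨hQf, _⟩ => ?_
  rw [hQf, map_smul, map_smul, smul_smul, div_mul_div_cancel₀ hlam, div_self hη, one_smul]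

theorem exists_perronComplement_eigenvector_iff (h : CompleteOrthogonalIdempotents ![P, Q, C])
    (hR1 : (lam • 1 - Q ∘L M ∘L Q) ∘L R = 1) (hR2 : R ∘L (lam • 1 - Q ∘L M ∘L Q) = 1)
    (hlam : lam ≠ 0) (hη : η ≠ 0) :
    (∃ f : E, f ≠ 0 ∧ perronComplement P Q M R f = η • f) ↔
      ∃ f : E, f ≠ 0 ∧ ((P + Q) ∘L M ∘L P + (η / lam) • (P + Q) ∘L M ∘L Q) f = η • f := by
  have hPP : ∀ x, P (P x) = P x := h.apply_apply_self 0
  have hPQ : ∀ x, P (Q x) = 0 := h.apply_apply_of_ne (i := 0) (j := 1) (by decide)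
  have hQP : ∀ x, Q (P x) = 0 := h.apply_apply_of_ne (i := 1) (j := 0) (by decide)
  have hCP : ∀ x, C (P x) = 0 := h.apply_apply_of_ne (i := 2) (j := 0) (by decide)
  have hCQ : ∀ x, C (Q x) = 0 := h.apply_apply_of_ne (i := 2) (j := 1) (by decide)
  have hQRQ : ∀ x, Q (R (Q x)) = R (Q x) := (h.idem 1).apply_resolvent_apply hR1 hR2
  constructor
  · rintro ⟨f, hf0, hf⟩
    have hPf : P f = f := by
      have hP : P (perronComplement P Q M R f) = perronComplement P Q M R f := by
        simp only [perronComplement, add_apply, coe_comp, Function.comp_apply, map_add, hPP]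
      rw [hf, map_smul] at hP
      exact smul_right_injective E hη hP
    set g := R (Q (M f))
    have hg : Q g = g := hQRQ _
    have hPg : P g = 0 := by rw [← hg, hPQ]
    have hCg : C g = 0 := by rw [← hg, hCQ]
    have hQf : Q f = 0 := by rw [← hPf, hQP]
    have hCf : C f = 0 := by rw [← hPf, hCP]
    have hPfg : P (f + (lam / η) • g) = f := by rw [map_add, map_smul, hPg, smul_zero, add_zero, hPf]
    refine ⟨f + (lam / η) • g, fun h0 => hf0 ?_,
      (perronComplement_eigen_and_extension_iff h hR1 hR2 hlam hη _).mp ⟨?_, ?_, ?_⟩⟩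
    · rw [← hPfg, h0, map_zero]
    · rw [hPfg, hf]
    · simp only [coe_comp, Function.comp_apply, hPfg, hPf, map_add, map_smul, hg, hQf, zero_add]
      rfl
    · rw [map_add, map_smul, hCg, hCf, smul_zero, add_zero]
  · rintro ⟨f, hf0, hf⟩
    obtain ⟨hPC, hQf, hCf⟩ := (perronComplement_eigen_and_extension_iff h hR1 hR2 hlam hη f).mpr hf
    refine ⟨P f, fun hPf => hf0 ?_, hPC⟩
    rw [← h.apply_add_apply_add_apply f, hQf, hCf, hPf]
    simp

end PerronComplement

theorem stmt6_general {S 𝒳 : Type*} [NormedAddCommGroup 𝒳] [NormedSpace ℂ 𝒳]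
    (e : Set S → (𝒳 →L[ℂ] 𝒳))
    (he : ∀ U V : Set S, (e U) ∘L (e V) = e (U ∩ V))
    (hbot : e ∅ = 0)
    (hadd : ∀ U V : Set S, Disjoint U V → e (U ∪ V) = e U + e V)
    (hcompl : ∀ U : Set S, e U + e Uᶜ = 1)
    (ℳ : 𝒳 →L[ℂ] 𝒳) (U V : Set S) (hUV : Disjoint U V)
    (lam η : ℂ) (hlam : lam ≠ 0) (hη : η ≠ 0)
    (R : 𝒳 →L[ℂ] 𝒳)
    (hR1 : (lam • (1 : 𝒳 →L[ℂ] 𝒳) - (e V ∘L ℳ ∘L e V)) ∘L R = 1)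
    (hR2 : R ∘L (lam • (1 : 𝒳 →L[ℂ] 𝒳) - (e V ∘L ℳ ∘L e V)) = 1) :
    let W := U ∪ V
    let MUU := e U ∘L ℳ ∘L e U
    let MUV := e U ∘L ℳ ∘L e V
    let MVU := e V ∘L ℳ ∘L e U
    let MWU := e W ∘L ℳ ∘L e U
    let MWV := e W ∘L ℳ ∘L e V
    let PC := MUU + MUV ∘L (R ∘L MVU)
    (∀ f : 𝒳,
      (PC (e U f) = η • e U f ∧
        e V f = (lam / η) • R (MVU (e U f)) ∧
        e Wᶜ f = 0) ↔
      (MWU + (η / lam) • MWV) f = η • f) ∧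
    ((∃ f : 𝒳, f ≠ 0 ∧ PC f = η • f) ↔
      (∃ f : 𝒳, f ≠ 0 ∧ (MWU + (η / lam) • MWV) f = η • f)) := by
  intro W MUU MUV MVU MWU MWV PC
  have hproj : CompleteOrthogonalIdempotents ![e U, e V, e Wᶜ] :=
    completeOrthogonalIdempotents_of_disjoint e he hbot hadd hcompl hUV
  have key := And.intro (perronComplement_eigen_and_extension_iff hproj hR1 hR2 hlam hη)
    (exists_perronComplement_eigenvector_iff hproj hR1 hR2 hlam hη)
  rw [← hadd U V hUV] at key
  exact key

/-- Proposition `prop:PC_evalprop`(1): eigenfunction correspondence for the Perron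
complement `ℳ[U,V,λ] = ℳ_UU + ℳ_UV(λI-ℳ_VV)⁻¹ℳ_VU`. Here `R = (λI - ℳ_VV)⁻¹`. -/
theorem stmt6 {S 𝒳 : Type*} [NormedAddCommGroup 𝒳] [NormedSpace ℂ 𝒳] [CompleteSpace 𝒳]
    (e : Set S → (𝒳 →L[ℂ] 𝒳))
    (he : ∀ U V : Set S, (e U) ∘L (e V) = e (U ∩ V))
    (hbot : e ∅ = 0)
    (hadd : ∀ U V : Set S, Disjoint U V → e (U ∪ V) = e U + e V)
    (hcompl : ∀ U : Set S, e U + e Uᶜ = 1)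
    (ℳ : 𝒳 →L[ℂ] 𝒳) (U V : Set S) (hUV : Disjoint U V) (hU : U.Nonempty)
    (lam η : ℂ) (hlam : lam ≠ 0) (hη : η ≠ 0)
    (R : 𝒳 →L[ℂ] 𝒳)
    (hR1 : (lam • (1 : 𝒳 →L[ℂ] 𝒳) - (e V ∘L ℳ ∘L e V)) ∘L R = 1)
    (hR2 : R ∘L (lam • (1 : 𝒳 →L[ℂ] 𝒳) - (e V ∘L ℳ ∘L e V)) = 1) :
    let W := U ∪ V
    let MUU := e U ∘L ℳ ∘L e U
    let MUV := e U ∘L ℳ ∘L e V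
    let MVU := e V ∘L ℳ ∘L e U
    let MWU := e W ∘L ℳ ∘L e U
    let MWV := e W ∘L ℳ ∘L e V
    let PC := MUU + MUV ∘L (R ∘L MVU)
    (∀ f : 𝒳,
      (PC (e U f) = η • e U f ∧
        e V f = (lam / η) • R (MVU (e U f)) ∧
        e Wᶜ f = 0) ↔
      (MWU + (η / lam) • MWV) f = η • f) ∧
    ((∃ f : 𝒳, f ≠ 0 ∧ PC f = η • f) ↔
      (∃ f : 𝒳, f ≠ 0 ∧ (MWU + (η / lam) • MWV) f = η • f)) :=
  stmt6_general e he hbot hadd hcompl ℳ U V hUV lam η hlam hη R hR1 hR2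
end

section
/- Let T₀ be finite and B(i,j)>0 (i≠j) satisfy the cocycle identity B(i,j)B(j,k)=B(i,k) and B(i,j)=1/B(j,i). Suppose f satisfies f(j₁,j₀)=(1+B(j₀,j₁))^{-1} and the recursion f(j₁⋯j_{n+1},j₀) = (1 + [1/(f(j₂⋯j_{n+1},j₁)^{-1}−1)]·[f(j₂⋯j_{n+1},j₀)^{-1}−1]·f(j₂⋯j_{n+1},j₁)^{-1})^{-1}. Then for all 1≤n<#T₀ and distinct j₀,…,jₙ∈T₀: f(j₁⋯jₙ, j₀) = (1 + Σ_{i=1}^{n} B(j₀,jᵢ))^{-1}. -/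
theorem key_stmt11 (b a : ℝ) (hb : 0 < b) (ha : 0 < a) :
    (1 - (1 + a)⁻¹) * (1 + b * a)⁻¹ /
      (1 - (1 + b * a)⁻¹ + (1 - (1 + a)⁻¹) * (1 + b * a)⁻¹) = (1 + (b + b * a))⁻¹ := by
  have h1 : (1 : ℝ) + a ≠ 0 := by positivity
  have h2 : (1 : ℝ) + b * a ≠ 0 := by positivity
  have h3 : (1 : ℝ) + (b + b * a) ≠ 0 := by positivity
  have hden : 1 - (1 + b * a)⁻¹ + (1 - (1 + a)⁻¹) * (1 + b * a)⁻¹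
      = (b * a * (1 + a) + a) / ((1 + a) * (1 + b * a)) := by
    field_simp; ring
  have hden' : (b * a * (1 + a) + a) ≠ 0 := by positivity
  rw [hden]
  rw [div_eq_iff (by positivity)]
  field_simp
  ring

/-- Equation `(eq:fe=3_2)`: with `g s j₀` denoting `f(j₁⋯jₙ, j₀)` for `s = {j₁,…,jₙ}`,
the base case `g {j₁} j₀ = (1+B(j₀,j₁))⁻¹` and the recursion `(eq:fe=0_2)`
`g (insert j₁ s) j₀ = (1-g s j₁)·g s j₀ / ((1-g s j₀) + (1-g s j₁)·g s j₀)`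
(where `f(j, s) = 1 - g s j` is the complementary quantity) imply
`g s j₀ = (1 + Σ_{i∈s} B(j₀,i))⁻¹` for all nonempty `s` and `j₀ ∉ s`. -/
theorem stmt11 {T₀ : Type*} [Fintype T₀] [DecidableEq T₀]
    (B : T₀ → T₀ → ℝ) (g : Finset T₀ → T₀ → ℝ)
    (hBpos : ∀ i j, i ≠ j → 0 < B i j)
    (hBinv : ∀ i j, i ≠ j → B i j = (B j i)⁻¹)
    (hBcyc : ∀ i j k, i ≠ j → j ≠ k → i ≠ k → B i j * B j k = B i k)
    (hg01 : ∀ (s : Finset T₀) (j₀ : T₀), s.Nonempty → j₀ ∉ s →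
      0 < g s j₀ ∧ g s j₀ < 1)
    (hbase : ∀ j₀ j₁ : T₀, j₀ ≠ j₁ → g {j₁} j₀ = (1 + B j₀ j₁)⁻¹)
    (hrec : ∀ (s : Finset T₀) (j₀ j₁ : T₀), s.Nonempty → j₀ ∉ s → j₁ ∉ s → j₀ ≠ j₁ →
      g (insert j₁ s) j₀ =
        (1 - g s j₁) * g s j₀ / ((1 - g s j₀) + (1 - g s j₁) * g s j₀)) :
    ∀ (s : Finset T₀) (j₀ : T₀), s.Nonempty → j₀ ∉ s →
      g s j₀ = (1 + ∑ i ∈ s, B j₀ i)⁻¹ := by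
  intro s
  induction s using Finset.induction_on with
  | empty => rintro j₀ ⟨x, hx⟩ _; simp at hx
  | @insert j₁ s hj1 ih =>
    intro j₀ _ hj0
    have hj0j1 : j₀ ≠ j₁ := by rintro rfl; exact hj0 (Finset.mem_insert_self _ _)
    have hj0s : j₀ ∉ s := fun h' => hj0 (Finset.mem_insert_of_mem h')
    rcases s.eq_empty_or_nonempty with rfl | hs
    · simpa using hbase j₀ j₁ hj0j1
    · have h0 := ih j₀ hs hj0s
      have h1 := ih j₁ hs hj1
      have hA0 : 0 < ∑ i ∈ s, B j₀ i :=
        Finset.sum_pos (fun i hi => hBpos _ _ ((ne_of_mem_of_not_mem hi hj0s).symm)) hs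
      have hA1 : 0 < ∑ i ∈ s, B j₁ i :=
        Finset.sum_pos (fun i hi => hBpos _ _ ((ne_of_mem_of_not_mem hi hj1).symm)) hs
      have hB : 0 < B j₀ j₁ := hBpos _ _ hj0j1
      have hrel : ∑ i ∈ s, B j₀ i = B j₀ j₁ * ∑ i ∈ s, B j₁ i := by
        rw [Finset.mul_sum]
        refine Finset.sum_congr rfl fun i hi => ?_
        exact (hBcyc j₀ j₁ i hj0j1 ((ne_of_mem_of_not_mem hi hj1).symm)
          ((ne_of_mem_of_not_mem hi hj0s).symm)).symm
      rw [hrec s j₀ j₁ hs hj0s hj1 hj0j1, h0, h1, Finset.sum_insert hj1, hrel]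
      exact key_stmt11 (B j₀ j₁) (∑ i ∈ s, B j₁ i) hB hA1
end

section
/- Let X be a topological Markov shift with countable state space and irreducible transition matrix, and let (λ_ε, h_ε, ν_ε) be the Perron spectral triplet of the Ruelle operator ℒ_ε for a potential φ(ε,·). Fix W⊂S decomposed into nonempty sets W(1),…,W(m₀). Define the m₀×m₀ matrix D_ε^W(ij) = ν_ε^{W(i)}(ℒ_ε[W,S∖W,λ_ε] h_ε^{W(j)}) and vectors β_ε^W(i)=ν_ε^{W(i)}(h_ε^W), γ_ε^W(i)=ν_ε^W(χ_{W(i)}). Then D_ε^W β_ε^W = λ_ε β_ε^W, i.e., β_ε^W is a right eigenvector of D_ε^W with eigenvalue λ_ε, and Σᵢ β_ε^W(i)γ_ε^W(i)=1, Σᵢ γ_ε^W(i)=1. -/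
open ContinuousLinearMap

/-- Proposition `prop:DeEe_irre2_inf` (eigenvector part): for the Perron spectral triplet
`(λ, h^W, ν^W)` of the Perron complement `L = ℒ_ε[W,S∖W,λ_ε]` and a decomposition of `W`
into nonempty pieces `W(1),…,W(m₀)`, the matrix
`D(ij) = ν^{W(i)}(L h^{W(j)})` has right eigenvector `β(i) = ν^{W(i)}(h^W)` with eigenvalue
`λ`, and the normalizations `Σ β(i)γ(i) = 1`, `Σ γ(i) = 1` hold, where
`γ(i) = ν^W(χ_{W(i)})`. The Banach space of functions is abstracted via the
indicator-multiplication operators `e U`, the constant function `oneX`, the functional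
`νW = ν^W` and the function `hW = h^W`. -/
theorem stmt13 {S 𝒳 : Type*} [NormedAddCommGroup 𝒳] [NormedSpace ℝ 𝒳]
    {m₀ : ℕ} (hm : 0 < m₀)
    (e : Set S → (𝒳 →L[ℝ] 𝒳))
    (he : ∀ U V : Set S, (e U) ∘L (e V) = e (U ∩ V))
    (hbot : e ∅ = 0)
    (W : Fin m₀ → Set S)
    (hWdisj : Pairwise (Function.onFun Disjoint W))
    (hWne : ∀ i, (W i).Nonempty)
    (hpart : ∑ i, e (W i) = e (⋃ i, W i))
    (oneX hW : 𝒳) (νW : 𝒳 →L[ℝ] ℝ) (L : 𝒳 →L[ℝ] 𝒳)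
    (lam : ℝ) (hlam : 0 < lam)
    (heig : L hW = lam • hW)
    (hdual : ∀ f : 𝒳, νW (L f) = lam * νW f)
    (hnorm : νW hW = 1) (hone : νW oneX = 1)
    (hsupp : e (⋃ i, W i) hW = hW)
    (hνsupp : ∀ f : 𝒳, νW (e (⋃ i, W i) f) = νW f)
    (hγpos : ∀ i, 0 < νW (e (W i) oneX))
    (hβpos : ∀ i, 0 < νW (e (W i) hW)) :
    let γ : Fin m₀ → ℝ := fun i => νW (e (W i) oneX)
    let β : Fin m₀ → ℝ := fun i => νW (e (W i) hW) / γ i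
    let hWi : Fin m₀ → 𝒳 := fun j => (β j)⁻¹ • e (W j) hW
    let D : Fin m₀ → Fin m₀ → ℝ := fun i j => νW (e (W i) (L (hWi j))) / γ i
    (∀ i, ∑ j, D i j * β j = lam * β i) ∧
    (∑ i, β i * γ i = 1) ∧
    (∑ i, γ i = 1) := by
  intro γ β hWi D
  have hγne : ∀ i, γ i ≠ 0 := fun i => (hγpos i).ne'
  have hβne : ∀ i, β i ≠ 0 := fun i => (div_pos (hβpos i) (hγpos i)).ne'
  -- key: ∑ j, e (W j) hW = hW
  have hsum : ∑ j, e (W j) hW = hW := by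
    have := congrArg (fun T : 𝒳 →L[ℝ] 𝒳 => T hW) hpart
    simpa [ContinuousLinearMap.sum_apply, hsupp] using this
  refine ⟨?_, ?_, ?_⟩
  · intro i
    have : ∑ j, D i j * β j = νW (e (W i) (L hW)) / γ i := by
      rw [← hsum]
      rw [map_sum L, map_sum (e (W i)), map_sum νW, Finset.sum_div]
      refine Finset.sum_congr rfl fun j _ => ?_
      simp only [D, hWi]
      rw [map_smul L, map_smul (e (W i)), map_smul νW, smul_eq_mul]
      rw [div_mul_eq_mul_div, mul_comm, ← mul_assoc, mul_inv_cancel₀ (hβne j), one_mul]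
    rw [this, heig, map_smul (e (W i)), map_smul νW]
    simp only [β, smul_eq_mul]
    ring
  · have : ∑ i, β i * γ i = ∑ i, νW (e (W i) hW) := by
      refine Finset.sum_congr rfl fun i _ => ?_
      simp only [β]
      rw [div_mul_cancel₀ _ (hγne i)]
    rw [this]
    have := congrArg (fun T : 𝒳 →L[ℝ] 𝒳 => νW (T hW)) hpart
    simpa [ContinuousLinearMap.sum_apply, hsupp, hnorm, map_sum] using this
  · have := congrArg (fun T : 𝒳 →L[ℝ] 𝒳 => νW (T oneX)) hpart
    simpa [ContinuousLinearMap.sum_apply, hνsupp, hone, map_sum] using this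
end

section
/- In the setting above, the conditional measure μ_ε^W := h_ε^W ν_ε^W decomposes as μ_ε^W = Σ_{i=1}^{m₀} β_ε^W(i)γ_ε^W(i) μ_ε^{W(i)}, where μ_ε^{W(i)} = h_ε^{W(i)} ν_ε^{W(i)}; in particular μ_ε^W(f) = Σᵢ γ^W(i)β^W(i) μ_ε^{W(i)}(f) for every bounded Lipschitz f. -/
open ContinuousLinearMap

/-- Lemma `lem:mueQ=v1_2_inf`: the conditional measure `μ^W = h^W ν^W` decomposes as
`μ^W = Σᵢ β(i)γ(i) μ^{W(i)}` with `μ^{W(i)} = h^{W(i)} ν^{W(i)}`, i.e. for every `f`,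
`ν^W(h^W f) = Σᵢ β(i)γ(i) ν^{W(i)}(h^{W(i)} f)`; the cross terms vanish because
`h^{W(j)}` is supported on `Σ_{W(j)}` and `ν^{W(i)}` on the `W(i)`-block. The function
space is abstracted as a normed algebra `𝒳` with indicator operators `e U` satisfying
`e U (x·y) = (e U x)·y`. -/
theorem stmt14 {S 𝒳 : Type*} [NormedRing 𝒳] [NormedAlgebra ℝ 𝒳]
    {m₀ : ℕ} (hm : 0 < m₀)
    (e : Set S → (𝒳 →L[ℝ] 𝒳))
    (he : ∀ U V : Set S, (e U) ∘L (e V) = e (U ∩ V))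
    (hbot : e ∅ = 0)
    (hmul : ∀ (U : Set S) (x y : 𝒳), e U (x * y) = (e U x) * y)
    (W : Fin m₀ → Set S)
    (hWdisj : Pairwise (Function.onFun Disjoint W))
    (hWne : ∀ i, (W i).Nonempty)
    (hpart : ∑ i, e (W i) = e (⋃ i, W i))
    (oneX hW : 𝒳) (νW : 𝒳 →L[ℝ] ℝ) (L : 𝒳 →L[ℝ] 𝒳)
    (lam : ℝ) (hlam : 0 < lam)
    (heig : L hW = lam • hW)
    (hdual : ∀ f : 𝒳, νW (L f) = lam * νW f)
    (hnorm : νW hW = 1) (hone : νW oneX = 1)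
    (hsupp : e (⋃ i, W i) hW = hW)
    (hνsupp : ∀ f : 𝒳, νW (e (⋃ i, W i) f) = νW f)
    (hγpos : ∀ i, 0 < νW (e (W i) oneX))
    (hβpos : ∀ i, 0 < νW (e (W i) hW)) :
    let γ : Fin m₀ → ℝ := fun i => νW (e (W i) oneX)
    let β : Fin m₀ → ℝ := fun i => νW (e (W i) hW) / γ i
    let hWi : Fin m₀ → 𝒳 := fun j => (β j)⁻¹ • e (W j) hW
    -- μ^W(f) = ν^W(h^W·f) and μ^{W(i)}(f) = ν^{W(i)}(h^{W(i)}·f)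
    ∀ f : 𝒳, νW (hW * f) =
      ∑ i, (β i * γ i) * (νW (e (W i) (hWi i * f)) / γ i) := by
  intro γ β hWi f
  have hγne : ∀ i, γ i ≠ 0 := fun i => (hγpos i).ne'
  have hβne : ∀ i, β i ≠ 0 := fun i => (div_pos (hβpos i) (hγpos i)).ne'
  have hLHS : νW (hW * f) = ∑ i, νW (e (W i) (hW * f)) := by
    conv_lhs => rw [← hsupp]
    rw [← hmul, ← hpart]
    rw [ContinuousLinearMap.sum_apply, map_sum]
  rw [hLHS]
  refine Finset.sum_congr rfl fun i _ => ?_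
  have hkey : e (W i) (hWi i * f) = (β i)⁻¹ • e (W i) (hW * f) := by
    show e (W i) (((β i)⁻¹ • e (W i) hW) * f) = _
    rw [smul_mul_assoc, map_smul]
    congr 1
    rw [← hmul, ← ContinuousLinearMap.comp_apply, he, Set.inter_self, hmul]
  rw [hkey, map_smul, smul_eq_mul]
  clear_value hWi β γ
  field_simp [hβne i, hγne i]
end
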